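/- Let p ≠ 2 be a prime with p | D and p² ∤ D, let l ≥ 1 be an integer, and assume p^{l+1} divides none of A, B, A−B, G(A,B). Then S^(D;A,B)(ℚ_p) ≠ ∅ if and only if there exists t ∈ ℤ⁵ with at least one coordinate not divisible by p such that Q1(t) ≡ 0 (mod p^{8l+1}) and Q2(t) ≡ 0 (mod p^{8l+1}). -/

import Mathlib

/-!
A `ℚ_p`-point scales to a `ℤ_p`-point with a coordinate equal to `1`, and its reduction modulo
`p^(8l+1)` is the required integer solution. Conversely, a primitive solution `t` modulo
`p^(8l+1)` is lifted by Hensel's lemma, one coordinate at a time: `Q₁` and `Q₂` are quadratic in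
each coordinate, and `t₃` occurs only in `Q₁`, `t₄` only in `Q₂`.
* If `v(t₄) < 2l`, one of `t₀, t₁, t₂` has a partial derivative of `Q₁` of valuation `≤ 4l`
  (otherwise `v(D t₄²) > 8l`); lift `Q₁` in it, then `Q₂` in `t₄`.
* If `v(t₃) < 2l`, the same works with the roles of `Q₁, Q₂` exchanged; here `v(A - B) ≤ l` is
  what keeps a partial derivative of `Q₂` small.
* Otherwise `t₁` is a unit and `Q₁ - Q₂ ≡ t₀² + (A+B-1) t₀ t₁ + AB t₁² (mod p^(4l))`. The
  derivative `2t₀ + (A+B-1)t₁` of this form has square `G t₁² + 4(⋯)`, so valuation `≤ l`, and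
  `Q₂ - Q₁` is lifted in `t₀`. Then `Q₁` is lifted in `t₂`, which does not occur in `Q₂ - Q₁`;
  `v(t₂) ≤ 3l` because `v(AB) ≤ 2l`.
-/

/-- `S^(D;A,B)(K) ≠ ∅`: there is a nonzero vector `t ∈ K⁵` with `Q1(t) = Q2(t) = 0`. -/
def hasPointBSD (K : Type*) [Field K] (D A B : ℤ) : Prop :=
  ∃ t : Fin 5 → K, t ≠ 0 ∧
    (t 2) ^ 2 - (D : K) * (t 3) ^ 2 - t 0 * t 1 = 0 ∧
    (t 2) ^ 2 - (D : K) * (t 4) ^ 2 - (t 0 + (A : K) * t 1) * (t 0 + (B : K) * t 1) = 0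

open Function

section Quadrics

variable {R S : Type*} [CommRing R] [CommRing S]

def Q₁ (D : R) (t : Fin 5 → R) : R := t 2 ^ 2 - D * t 3 ^ 2 - t 0 * t 1

def Q₂ (D A B : R) (t : Fin 5 → R) : R :=
  t 2 ^ 2 - D * t 4 ^ 2 - (t 0 + A * t 1) * (t 0 + B * t 1)

theorem map_Q₁ (f : R →+* S) (D : R) (t : Fin 5 → R) : f (Q₁ D t) = Q₁ (f D) (f ∘ t) := by
  simp [Q₁]

theorem map_Q₂ (f : R →+* S) (D A B : R) (t : Fin 5 → R) :
    f (Q₂ D A B t) = Q₂ (f D) (f A) (f B) (f ∘ t) := by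
  simp [Q₂]

theorem Q₁_mul (D c : R) (t : Fin 5 → R) : Q₁ D (fun i => c * t i) = c ^ 2 * Q₁ D t := by
  simp only [Q₁]; ring

theorem Q₂_mul (D A B c : R) (t : Fin 5 → R) :
    Q₂ D A B (fun i => c * t i) = c ^ 2 * Q₂ D A B t := by
  simp only [Q₂]; ring

theorem dvd_Q₁_sub_Q₁ {x : R} {s t : Fin 5 → R} (D : R) (h : ∀ i, x ∣ s i - t i) :
    x ∣ Q₁ D s - Q₁ D t := by
  rw [← Ideal.mem_span_singleton, ← Ideal.Quotient.eq, map_Q₁, map_Q₁]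
  congr 1
  funext i
  exact Ideal.Quotient.eq.mpr (Ideal.mem_span_singleton.mpr (h i))

theorem dvd_Q₂_sub_Q₂ {x : R} {s t : Fin 5 → R} (D A B : R) (h : ∀ i, x ∣ s i - t i) :
    x ∣ Q₂ D A B s - Q₂ D A B t := by
  rw [← Ideal.mem_span_singleton, ← Ideal.Quotient.eq, map_Q₂, map_Q₂]
  congr 1
  funext i
  exact Ideal.Quotient.eq.mpr (Ideal.mem_span_singleton.mpr (h i))

theorem intCast_Q₁ (D : ℤ) (T : Fin 5 → ℤ) :
    ((Q₁ D T : ℤ) : R) = Q₁ (D : R) (fun i => (T i : R)) := by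
  simp [Q₁]

theorem intCast_Q₂ (D A B : ℤ) (T : Fin 5 → ℤ) :
    ((Q₂ D A B T : ℤ) : R) = Q₂ (D : R) A B (fun i => (T i : R)) := by
  simp [Q₂]

end Quadrics

theorem pow_dvd_mul_of_pow_dvd {M : Type*} [CommMonoid M] {π x y : M} {j m n : ℕ}
    (hx : π ^ m ∣ x) (hy : π ^ n ∣ y) (hj : j ≤ m + n) : π ^ j ∣ x * y :=
  (pow_dvd_pow π hj).trans (pow_add π m n ▸ mul_dvd_mul hx hy)

section Prime

variable {M : Type*} [CommMonoidWithZero M] [IsCancelMulZero M] {π : M}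

theorem Prime.pow_dvd_of_dvd_mul_of_not_pow_dvd (hπ : Prime π) {x y : M} {j m n : ℕ}
    (h : π ^ j ∣ x * y) (hx : ¬ π ^ (m + 1) ∣ x) (hj : m + n ≤ j) : π ^ n ∣ y := by
  induction m generalizing x j with
  | zero =>
    exact hπ.pow_dvd_of_dvd_mul_left n (by simpa using hx) ((pow_dvd_pow π (by omega)).trans h)
  | succ m ih =>
    by_cases hπx : π ∣ x
    · obtain ⟨x, rfl⟩ := hπx
      have h' : π ^ (j - 1) ∣ x * y := by
        rw [← mul_dvd_mul_iff_left hπ.ne_zero, ← pow_succ', Nat.sub_add_cancel (by omega),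
          ← mul_assoc]
        exact h
      exact ih h' (fun hx' => hx (by rw [pow_succ']; exact mul_dvd_mul_left π hx')) (by omega)
    · exact hπ.pow_dvd_of_dvd_mul_left n hπx ((pow_dvd_pow π (by omega)).trans h)

theorem Prime.pow_dvd_of_pow_dvd_sq (hπ : Prime π) {x : M} {j n : ℕ}
    (h : π ^ j ∣ x ^ 2) (hj : 2 * n ≤ j + 1) : π ^ n ∣ x := by
  obtain _ | n := n
  · simp
  by_contra hx
  exact hx (hπ.pow_dvd_of_dvd_mul_of_not_pow_dvd (sq x ▸ h) hx (by omega))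

theorem Prime.not_pow_dvd_mul (hπ : Prime π) {x y : M} {j m n : ℕ}
    (hx : ¬ π ^ (m + 1) ∣ x) (hy : ¬ π ^ n ∣ y) (hj : m + n ≤ j) : ¬ π ^ j ∣ x * y :=
  fun h => hy (hπ.pow_dvd_of_dvd_mul_of_not_pow_dvd h hx hj)

end Prime

namespace PadicInt

variable {p : ℕ} [Fact p.Prime]

theorem norm_le_pow_iff_dvd (x : ℤ_[p]) (n : ℕ) :
    ‖x‖ ≤ (p : ℝ) ^ (-n : ℤ) ↔ (p : ℤ_[p]) ^ n ∣ x := by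
  rw [norm_le_pow_iff_mem_span_pow, Ideal.mem_span_singleton]

theorem pow_le_norm_of_not_dvd {x : ℤ_[p]} {k : ℕ} (h : ¬ (p : ℤ_[p]) ^ (k + 1) ∣ x) :
    (p : ℝ) ^ (-k : ℤ) ≤ ‖x‖ := by
  rw [← norm_le_pow_iff_dvd, norm_le_pow_iff_norm_lt_pow_add_one] at h
  push_cast at h
  simpa using h

theorem dvd_iff_of_norm_eq {x y : ℤ_[p]} (h : ‖x‖ = ‖y‖) (n : ℕ) :
    (p : ℤ_[p]) ^ n ∣ x ↔ (p : ℤ_[p]) ^ n ∣ y := by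
  rw [← norm_le_pow_iff_dvd, ← norm_le_pow_iff_dvd, h]

theorem isUnit_two (hp2 : p ≠ 2) : IsUnit (2 : ℤ_[p]) := by
  rw [isUnit_iff, ← Nat.cast_ofNat, norm_natCast_eq_one_iff,
    Nat.coprime_primes (Fact.out) Nat.prime_two]
  exact hp2

open Polynomial in
theorem exists_root_of_quadratic {α β γ x : ℤ_[p]} {k n : ℕ}
    (hroot : (p : ℤ_[p]) ^ (k + n) ∣ α * x ^ 2 + β * x + γ)
    (hderiv : ¬ (p : ℤ_[p]) ^ (k + 1) ∣ 2 * α * x + β) (hkn : k < n) :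
    ∃ y, α * y ^ 2 + β * y + γ = 0 ∧ (p : ℤ_[p]) ^ n ∣ y - x := by
  set F : ℤ_[p][X] := C α * X ^ 2 + C β * X + C γ
  have hF : ∀ y, F.aeval y = α * y ^ 2 + β * y + γ := by simp [F]
  have hF' : ∀ y, F.derivative.aeval y = 2 * α * y + β := by
    intro y; simp [F]; ring
  have hp1 : (1 : ℝ) < p := mod_cast (Fact.out : p.Prime).one_lt
  have hnorm : ‖F.aeval x‖ < ‖F.derivative.aeval x‖ ^ 2 := by
    rw [hF, hF']
    calc ‖α * x ^ 2 + β * x + γ‖ ≤ (p : ℝ) ^ (-(k + n : ℕ) : ℤ) :=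
          (norm_le_pow_iff_dvd _ _).mpr hroot
      _ < ((p : ℝ) ^ (-k : ℤ)) ^ 2 := by
        rw [← zpow_natCast, ← zpow_mul]
        exact zpow_lt_zpow_right₀ hp1 (by push_cast; omega)
      _ ≤ ‖2 * α * x + β‖ ^ 2 := by gcongr; exact pow_le_norm_of_not_dvd hderiv
  obtain ⟨y, hy, hyx, -⟩ := hensels_lemma hnorm
  rw [hF] at hy
  rw [hF'] at hyx
  refine ⟨y, hy, ?_⟩
  -- `F x = F x - F y` factors through `x - y` with a cofactor of the same norm as `F' x`
  have hfactor : α * x ^ 2 + β * x + γ = ((2 * α * x + β) + α * (y - x)) * (x - y) := by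
    linear_combination hy
  have hcofactor : ‖(2 * α * x + β) + α * (y - x)‖ = ‖2 * α * x + β‖ := by
    have hlt : ‖α * (y - x)‖ < ‖2 * α * x + β‖ :=
      calc ‖α * (y - x)‖ = ‖α‖ * ‖y - x‖ := norm_mul _ _
        _ ≤ ‖y - x‖ := mul_le_of_le_one_left (norm_nonneg _) (norm_le_one α)
        _ < ‖2 * α * x + β‖ := hyx
    rw [norm_add_eq_max_of_ne hlt.ne', max_eq_left hlt.le]
  rw [hfactor] at hroot
  rw [← dvd_neg, neg_sub]
  exact prime_p.pow_dvd_of_dvd_mul_of_not_pow_dvd hroot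
    ((dvd_iff_of_norm_eq hcofactor _).not.mpr hderiv) le_rfl

theorem dvd_two_mul_iff (hp2 : p ≠ 2) {x y : ℤ_[p]} : y ∣ 2 * x ↔ y ∣ x :=
  (isUnit_two hp2).dvd_mul_left

theorem exists_update_root {ι : Type*} [DecidableEq ι] (f : (ι → ℤ_[p]) → ℤ_[p])
    (t : ι → ℤ_[p]) (i : ι) {α β γ : ℤ_[p]} {k n : ℕ}
    (hf : ∀ y, f (update t i y) = α * y ^ 2 + β * y + γ)
    (hroot : (p : ℤ_[p]) ^ (k + n) ∣ f t) (hderiv : ¬ (p : ℤ_[p]) ^ (k + 1) ∣ 2 * α * t i + β)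
    (hkn : k < n) :
    ∃ y, f (update t i y) = 0 ∧ ∀ m, (p : ℤ_[p]) ^ n ∣ update t i y m - t m := by
  rw [← update_eq_self i t, hf] at hroot
  obtain ⟨y, hy, hyt⟩ := exists_root_of_quadratic hroot hderiv hkn
  refine ⟨y, (hf y).trans hy, fun m => ?_⟩
  rcases eq_or_ne m i with rfl | hm
  · simpa using hyt
  · simp [update_of_ne hm]

end PadicInt

section Lifting

open PadicInt

variable {p : ℕ} [Fact p.Prime] {D A B : ℤ_[p]} {l : ℕ} {t : Fin 5 → ℤ_[p]}

theorem pow_dvd_of_pow_dvd_mul_sq (hD : ¬ (p : ℤ_[p]) ^ 2 ∣ D) {x : ℤ_[p]} {j n : ℕ}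
    (h : (p : ℤ_[p]) ^ j ∣ D * x ^ 2) (hj : 2 * n ≤ j) : (p : ℤ_[p]) ^ n ∣ x := by
  obtain _ | n := n
  · simp
  exact prime_p.pow_dvd_of_pow_dvd_sq
    (prime_p.pow_dvd_of_dvd_mul_of_not_pow_dvd h hD (m := 1) (n := j - 1) (by omega)) (by omega)

theorem exists_update_mul_sq_root (hp2 : p ≠ 2) (hD : ¬ (p : ℤ_[p]) ^ 2 ∣ D)
    (f : (Fin 5 → ℤ_[p]) → ℤ_[p]) (s : Fin 5 → ℤ_[p]) (i : Fin 5) {γ : ℤ_[p]} {n : ℕ}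
    (hf : ∀ y, f (update s i y) = -D * y ^ 2 + γ) (hroot : (p : ℤ_[p]) ^ (2 * n + 1) ∣ f s)
    (hsi : ¬ (p : ℤ_[p]) ^ n ∣ s i) :
    ∃ y, y ≠ 0 ∧ f (update s i y) = 0 := by
  have hderiv : ¬ (p : ℤ_[p]) ^ (n + 1) ∣ 2 * -D * s i + 0 := by
    rw [show 2 * -D * s i + 0 = -(2 * (D * s i)) by ring, dvd_neg, dvd_two_mul_iff hp2]
    exact prime_p.not_pow_dvd_mul hD hsi (by omega)
  obtain ⟨y, hy, hys⟩ := exists_update_root f s i (α := -D) (β := 0) (γ := γ)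
    (fun y => (hf y).trans (by ring)) (k := n) (n := n + 1)
    (by rwa [show n + (n + 1) = 2 * n + 1 by ring]) hderiv (by omega)
  refine ⟨y, ?_, hy⟩
  rintro rfl
  have := hys i
  rw [update_self, zero_sub, dvd_neg] at this
  exact hsi ((pow_dvd_pow _ (by omega)).trans this)

theorem pow_dvd_t4_of_pow_dvd_t0_t1_t2 (hD : ¬ (p : ℤ_[p]) ^ 2 ∣ D)
    (ht₂ : (p : ℤ_[p]) ^ (8 * l + 1) ∣ Q₂ D A B t) (ha : (p : ℤ_[p]) ^ (4 * l + 1) ∣ t 0)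
    (hb : (p : ℤ_[p]) ^ (4 * l + 1) ∣ t 1) (hc : (p : ℤ_[p]) ^ (4 * l + 1) ∣ t 2) :
    (p : ℤ_[p]) ^ (2 * l) ∣ t 4 := by
  refine pow_dvd_of_pow_dvd_mul_sq hD (j := 8 * l + 1) ?_ (by omega)
  rw [show D * t 4 ^ 2 = t 2 * t 2 - (t 0 + A * t 1) * (t 0 + B * t 1) - Q₂ D A B t by
    simp only [Q₂]; ring]
  refine dvd_sub (dvd_sub (pow_dvd_mul_of_pow_dvd hc hc (by omega))
    (pow_dvd_mul_of_pow_dvd (m := 4 * l + 1) (n := 4 * l + 1) ?_ ?_ (by omega))) ht₂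
  exacts [dvd_add ha (hb.mul_left A), dvd_add ha (hb.mul_left B)]

theorem pow_dvd_t3_of_pow_dvd_partials (hD : ¬ (p : ℤ_[p]) ^ 2 ∣ D)
    (hAB : ¬ (p : ℤ_[p]) ^ (l + 1) ∣ A - B) (ht₁ : (p : ℤ_[p]) ^ (8 * l + 1) ∣ Q₁ D t)
    (hσ : (p : ℤ_[p]) ^ (4 * l + 1) ∣ 2 * t 0 + (A + B) * t 1)
    (hτ : (p : ℤ_[p]) ^ (4 * l + 1) ∣ (A + B) * t 0 + 2 * A * B * t 1)
    (hc : (p : ℤ_[p]) ^ (4 * l + 1) ∣ t 2) :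
    (p : ℤ_[p]) ^ (2 * l) ∣ t 3 := by
  have hAB2 : ¬ (p : ℤ_[p]) ^ (2 * l + 1) ∣ (A - B) ^ 2 :=
    sq (A - B) ▸ prime_p.not_pow_dvd_mul hAB hAB (by omega)
  have ha : (p : ℤ_[p]) ^ (2 * l + 1) ∣ t 0 := by
    refine prime_p.pow_dvd_of_dvd_mul_of_not_pow_dvd (j := 4 * l + 1) ?_ hAB2 (by omega)
    rw [show (A - B) ^ 2 * t 0
      = (A + B) * ((A + B) * t 0 + 2 * A * B * t 1) - 2 * A * B * (2 * t 0 + (A + B) * t 1)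
      by ring]
    exact dvd_sub (hτ.mul_left _) (hσ.mul_left _)
  have hb : (p : ℤ_[p]) ^ (2 * l + 1) ∣ t 1 := by
    refine prime_p.pow_dvd_of_dvd_mul_of_not_pow_dvd (j := 4 * l + 1) ?_ hAB2 (by omega)
    rw [show (A - B) ^ 2 * t 1
      = (A + B) * (2 * t 0 + (A + B) * t 1) - 2 * ((A + B) * t 0 + 2 * A * B * t 1) by ring]
    exact dvd_sub (hσ.mul_left _) (hτ.mul_left _)
  refine pow_dvd_of_pow_dvd_mul_sq hD (j := 4 * l) ?_ (by omega)
  rw [show D * t 3 ^ 2 = t 2 * t 2 - t 0 * t 1 - Q₁ D t by simp only [Q₁]; ring]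
  exact dvd_sub (dvd_sub (pow_dvd_mul_of_pow_dvd hc hc (by omega))
    (pow_dvd_mul_of_pow_dvd ha hb (by omega))) ((pow_dvd_pow _ (by omega)).trans ht₁)

theorem exists_Q₁_root_near (hp2 : p ≠ 2) (hD : ¬ (p : ℤ_[p]) ^ 2 ∣ D)
    (ht₁ : (p : ℤ_[p]) ^ (8 * l + 1) ∣ Q₁ D t) (ht₂ : (p : ℤ_[p]) ^ (8 * l + 1) ∣ Q₂ D A B t)
    (he : ¬ (p : ℤ_[p]) ^ (2 * l) ∣ t 4) :
    ∃ s, Q₁ D s = 0 ∧ (∀ i, (p : ℤ_[p]) ^ (4 * l + 1) ∣ s i - t i) ∧ s 4 = t 4 := by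
  have ht₁' : (p : ℤ_[p]) ^ (4 * l + (4 * l + 1)) ∣ Q₁ D t := by
    rwa [show 4 * l + (4 * l + 1) = 8 * l + 1 by ring]
  by_cases hb : (p : ℤ_[p]) ^ (4 * l + 1) ∣ t 1
  · by_cases ha : (p : ℤ_[p]) ^ (4 * l + 1) ∣ t 0
    · by_cases hc : (p : ℤ_[p]) ^ (4 * l + 1) ∣ t 2
      · exact absurd (pow_dvd_t4_of_pow_dvd_t0_t1_t2 hD ht₂ ha hb hc) he
      · obtain ⟨y, hy, hyt⟩ := exists_update_root (Q₁ D) t 2 (α := 1) (β := 0)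
          (γ := -D * t 3 ^ 2 - t 0 * t 1) (fun y => by simp [Q₁]; ring) ht₁'
          (by simpa [dvd_two_mul_iff hp2] using hc) (by omega)
        exact ⟨_, hy, hyt, by simp⟩
    · obtain ⟨y, hy, hyt⟩ := exists_update_root (Q₁ D) t 1 (α := 0) (β := -t 0)
        (γ := t 2 ^ 2 - D * t 3 ^ 2) (fun y => by simp [Q₁]; ring) ht₁'
        (by simpa using ha) (by omega)
      exact ⟨_, hy, hyt, by simp⟩
  · obtain ⟨y, hy, hyt⟩ := exists_update_root (Q₁ D) t 0 (α := 0) (β := -t 1)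
      (γ := t 2 ^ 2 - D * t 3 ^ 2) (fun y => by simp [Q₁]; ring) ht₁'
      (by simpa using hb) (by omega)
    exact ⟨_, hy, hyt, by simp⟩

theorem exists_Q₂_root_near (hp2 : p ≠ 2) (hD : ¬ (p : ℤ_[p]) ^ 2 ∣ D)
    (hAB : ¬ (p : ℤ_[p]) ^ (l + 1) ∣ A - B)
    (ht₁ : (p : ℤ_[p]) ^ (8 * l + 1) ∣ Q₁ D t) (ht₂ : (p : ℤ_[p]) ^ (8 * l + 1) ∣ Q₂ D A B t)
    (hd : ¬ (p : ℤ_[p]) ^ (2 * l) ∣ t 3) :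
    ∃ s, Q₂ D A B s = 0 ∧ (∀ i, (p : ℤ_[p]) ^ (4 * l + 1) ∣ s i - t i) ∧ s 3 = t 3 := by
  have ht₂' : (p : ℤ_[p]) ^ (4 * l + (4 * l + 1)) ∣ Q₂ D A B t := by
    rwa [show 4 * l + (4 * l + 1) = 8 * l + 1 by ring]
  by_cases hσ : (p : ℤ_[p]) ^ (4 * l + 1) ∣ 2 * t 0 + (A + B) * t 1
  · by_cases hτ : (p : ℤ_[p]) ^ (4 * l + 1) ∣ (A + B) * t 0 + 2 * A * B * t 1
    · by_cases hc : (p : ℤ_[p]) ^ (4 * l + 1) ∣ t 2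
      · exact absurd (pow_dvd_t3_of_pow_dvd_partials hD hAB ht₁ hσ hτ hc) hd
      · obtain ⟨y, hy, hyt⟩ := exists_update_root (Q₂ D A B) t 2 (α := 1) (β := 0)
          (γ := -D * t 4 ^ 2 - (t 0 + A * t 1) * (t 0 + B * t 1)) (fun y => by simp [Q₂]; ring)
          ht₂' (by simpa [dvd_two_mul_iff hp2] using hc) (by omega)
        exact ⟨_, hy, hyt, by simp⟩
    · obtain ⟨y, hy, hyt⟩ := exists_update_root (Q₂ D A B) t 1 (α := -(A * B))
        (β := -(A + B) * t 0) (γ := t 2 ^ 2 - D * t 4 ^ 2 - t 0 ^ 2)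
        (fun y => by simp [Q₂]; ring) ht₂'
        (by rwa [show 2 * -(A * B) * t 1 + -(A + B) * t 0
          = -((A + B) * t 0 + 2 * A * B * t 1) by ring, dvd_neg]) (by omega)
      exact ⟨_, hy, hyt, by simp⟩
  · obtain ⟨y, hy, hyt⟩ := exists_update_root (Q₂ D A B) t 0 (α := -1) (β := -(A + B) * t 1)
      (γ := t 2 ^ 2 - D * t 4 ^ 2 - A * B * t 1 ^ 2) (fun y => by simp [Q₂]; ring) ht₂'
      (by rwa [show 2 * -1 * t 0 + -(A + B) * t 1 = -(2 * t 0 + (A + B) * t 1) by ring,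
        dvd_neg]) (by omega)
    exact ⟨_, hy, hyt, by simp⟩

theorem exists_root_of_not_pow_dvd_t4 (hp2 : p ≠ 2) (hD : ¬ (p : ℤ_[p]) ^ 2 ∣ D)
    (ht₁ : (p : ℤ_[p]) ^ (8 * l + 1) ∣ Q₁ D t) (ht₂ : (p : ℤ_[p]) ^ (8 * l + 1) ∣ Q₂ D A B t)
    (he : ¬ (p : ℤ_[p]) ^ (2 * l) ∣ t 4) :
    ∃ s ≠ 0, Q₁ D s = 0 ∧ Q₂ D A B s = 0 := by
  obtain ⟨s, hs₁, hst, hs4⟩ := exists_Q₁_root_near hp2 hD ht₁ ht₂ he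
  have hs₂ : (p : ℤ_[p]) ^ (2 * (2 * l) + 1) ∣ Q₂ D A B s := by
    rw [show 2 * (2 * l) + 1 = 4 * l + 1 by ring, ← sub_add_cancel (Q₂ D A B s) (Q₂ D A B t)]
    exact dvd_add (dvd_Q₂_sub_Q₂ D A B hst)
      ((pow_dvd_pow _ (by omega)).trans ht₂)
  obtain ⟨y, hy0, hy⟩ := exists_update_mul_sq_root hp2 hD (Q₂ D A B) s 4
    (γ := s 2 ^ 2 - (s 0 + A * s 1) * (s 0 + B * s 1)) (fun y => by simp [Q₂]; ring) hs₂
    (hs4 ▸ he)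
  refine ⟨update s 4 y, fun h => hy0 (by simpa using congr_fun h 4), ?_, hy⟩
  rw [← hs₁]
  simp [Q₁]

theorem exists_root_of_not_pow_dvd_t3 (hp2 : p ≠ 2) (hD : ¬ (p : ℤ_[p]) ^ 2 ∣ D)
    (hAB : ¬ (p : ℤ_[p]) ^ (l + 1) ∣ A - B)
    (ht₁ : (p : ℤ_[p]) ^ (8 * l + 1) ∣ Q₁ D t) (ht₂ : (p : ℤ_[p]) ^ (8 * l + 1) ∣ Q₂ D A B t)
    (hd : ¬ (p : ℤ_[p]) ^ (2 * l) ∣ t 3) :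
    ∃ s ≠ 0, Q₁ D s = 0 ∧ Q₂ D A B s = 0 := by
  obtain ⟨s, hs₂, hst, hs3⟩ := exists_Q₂_root_near hp2 hD hAB ht₁ ht₂ hd
  have hs₁ : (p : ℤ_[p]) ^ (2 * (2 * l) + 1) ∣ Q₁ D s := by
    rw [show 2 * (2 * l) + 1 = 4 * l + 1 by ring, ← sub_add_cancel (Q₁ D s) (Q₁ D t)]
    exact dvd_add (dvd_Q₁_sub_Q₁ D hst)
      ((pow_dvd_pow _ (by omega)).trans ht₁)
  obtain ⟨y, hy0, hy⟩ := exists_update_mul_sq_root hp2 hD (Q₁ D) s 3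
    (γ := s 2 ^ 2 - s 0 * s 1) (fun y => by simp [Q₁]; ring) hs₁ (hs3 ▸ hd)
  refine ⟨update s 3 y, fun h => hy0 (by simpa using congr_fun h 3), hy, ?_⟩
  rw [← hs₂]
  simp [Q₂]

theorem pow_dvd_Q₁_sub_Q₂_form (ht₁ : (p : ℤ_[p]) ^ (8 * l + 1) ∣ Q₁ D t)
    (ht₂ : (p : ℤ_[p]) ^ (8 * l + 1) ∣ Q₂ D A B t)
    (hd : (p : ℤ_[p]) ^ (2 * l) ∣ t 3) (he : (p : ℤ_[p]) ^ (2 * l) ∣ t 4) :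
    (p : ℤ_[p]) ^ (4 * l) ∣ t 0 ^ 2 + (A + B - 1) * t 0 * t 1 + A * B * t 1 ^ 2 := by
  rw [show t 0 ^ 2 + (A + B - 1) * t 0 * t 1 + A * B * t 1 ^ 2
    = Q₁ D t - Q₂ D A B t - D * (t 4 * t 4) + D * (t 3 * t 3) by simp only [Q₁, Q₂]; ring]
  refine dvd_add (dvd_sub (dvd_sub ?_ ?_) ?_) ?_
  · exact (pow_dvd_pow _ (by omega)).trans ht₁
  · exact (pow_dvd_pow _ (by omega)).trans ht₂
  · exact (pow_dvd_mul_of_pow_dvd he he (by omega)).mul_left D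
  · exact (pow_dvd_mul_of_pow_dvd hd hd (by omega)).mul_left D

theorem not_dvd_t1 (hl : 1 ≤ l) (hprim : ∃ i, ¬ (p : ℤ_[p]) ∣ t i)
    (ht₁ : (p : ℤ_[p]) ^ (8 * l + 1) ∣ Q₁ D t)
    (hφ : (p : ℤ_[p]) ^ (4 * l) ∣ t 0 ^ 2 + (A + B - 1) * t 0 * t 1 + A * B * t 1 ^ 2)
    (hd : (p : ℤ_[p]) ^ (2 * l) ∣ t 3) (he : (p : ℤ_[p]) ^ (2 * l) ∣ t 4) :
    ¬ (p : ℤ_[p]) ∣ t 1 := by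
  intro hb
  have hP : ∀ {k x}, 1 ≤ k → (p : ℤ_[p]) ^ k ∣ x → (p : ℤ_[p]) ∣ x :=
    fun hk h => (dvd_pow_self _ (by omega)).trans h
  have ha : (p : ℤ_[p]) ∣ t 0 := by
    refine prime_p.dvd_of_dvd_pow (n := 2) ?_
    rw [show t 0 ^ 2 = (t 0 ^ 2 + (A + B - 1) * t 0 * t 1 + A * B * t 1 ^ 2)
      - (A + B - 1) * t 0 * t 1 - A * B * t 1 ^ 2 by ring]
    exact dvd_sub (dvd_sub (hP (by omega) hφ) (hb.mul_left _))
      ((dvd_pow hb two_ne_zero).mul_left _)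
  have hc : (p : ℤ_[p]) ∣ t 2 := by
    refine prime_p.dvd_of_dvd_pow (n := 2) ?_
    rw [show t 2 ^ 2 = Q₁ D t + D * t 3 ^ 2 + t 0 * t 1 by simp only [Q₁]; ring]
    exact dvd_add (dvd_add (hP (by omega) ht₁)
      ((dvd_pow (hP (by omega) hd) two_ne_zero).mul_left D)) (hb.mul_left _)
  obtain ⟨i, hi⟩ := hprim
  fin_cases i
  exacts [hi ha, hi hb, hi hc, hi (hP (by omega) hd), hi (hP (by omega) he)]

theorem not_pow_dvd_disc (hl : 1 ≤ l)
    (hG : ¬ (p : ℤ_[p]) ^ (l + 1) ∣ A ^ 2 - 2 * A * B + B ^ 2 - 2 * A - 2 * B + 1)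
    (hb : ¬ (p : ℤ_[p]) ∣ t 1)
    (hφ : (p : ℤ_[p]) ^ (4 * l) ∣ t 0 ^ 2 + (A + B - 1) * t 0 * t 1 + A * B * t 1 ^ 2) :
    ¬ (p : ℤ_[p]) ^ (l + 1) ∣ 2 * t 0 + (A + B - 1) * t 1 := by
  intro hw
  have hb2 : ¬ (p : ℤ_[p]) ^ (0 + 1) ∣ t 1 ^ 2 := by
    simpa using fun h => hb (prime_p.dvd_of_dvd_pow h)
  refine hG (prime_p.pow_dvd_of_dvd_mul_of_not_pow_dvd ?_ hb2 le_rfl)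
  rw [show t 1 ^ 2 * (A ^ 2 - 2 * A * B + B ^ 2 - 2 * A - 2 * B + 1)
    = (2 * t 0 + (A + B - 1) * t 1) * (2 * t 0 + (A + B - 1) * t 1)
      - 4 * (t 0 ^ 2 + (A + B - 1) * t 0 * t 1 + A * B * t 1 ^ 2) by ring]
  exact dvd_sub ((pow_dvd_pow _ (by omega)).trans (hw.mul_right _))
    (((pow_dvd_pow _ (by omega)).trans hφ).mul_left 4)

theorem not_pow_dvd_t2 (hl : 1 ≤ l) (hA : ¬ (p : ℤ_[p]) ^ (l + 1) ∣ A)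
    (hB : ¬ (p : ℤ_[p]) ^ (l + 1) ∣ B) (hb : ¬ (p : ℤ_[p]) ∣ t 1)
    (ht₁ : (p : ℤ_[p]) ^ (8 * l + 1) ∣ Q₁ D t)
    (hφ : (p : ℤ_[p]) ^ (4 * l) ∣ t 0 ^ 2 + (A + B - 1) * t 0 * t 1 + A * B * t 1 ^ 2)
    (hd : (p : ℤ_[p]) ^ (2 * l) ∣ t 3) :
    ¬ (p : ℤ_[p]) ^ (3 * l + 1) ∣ t 2 := by
  intro hc
  have hb' : ¬ (p : ℤ_[p]) ^ (0 + 1) ∣ t 1 := by simpa using hb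
  have ha : (p : ℤ_[p]) ^ (4 * l) ∣ t 0 := by
    refine prime_p.pow_dvd_of_dvd_mul_of_not_pow_dvd (j := 4 * l) ?_ hb' (by omega)
    rw [show t 1 * t 0 = t 2 * t 2 - D * (t 3 * t 3) - Q₁ D t by simp only [Q₁]; ring]
    exact dvd_sub (dvd_sub (pow_dvd_mul_of_pow_dvd hc hc (by omega))
      ((pow_dvd_mul_of_pow_dvd hd hd (by omega)).mul_left D))
      ((pow_dvd_pow _ (by omega)).trans ht₁)
  have hABt : (p : ℤ_[p]) ^ (4 * l) ∣ t 1 * (t 1 * (A * B)) := by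
    rw [show t 1 * (t 1 * (A * B)) = (t 0 ^ 2 + (A + B - 1) * t 0 * t 1 + A * B * t 1 ^ 2)
      - t 0 * (t 0 + (A + B - 1) * t 1) by ring]
    exact dvd_sub hφ (ha.mul_right _)
  have hABt' : (p : ℤ_[p]) ^ (4 * l) ∣ t 1 * (A * B) :=
    prime_p.pow_dvd_of_dvd_mul_of_not_pow_dvd hABt hb' (by omega)
  exact prime_p.not_pow_dvd_mul hA hB (by omega)
    (prime_p.pow_dvd_of_dvd_mul_of_not_pow_dvd hABt' hb' (n := 4 * l) (by omega))

theorem exists_root_of_pow_dvd_t3_t4 (hp2 : p ≠ 2) (hl : 1 ≤ l)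
    (hA : ¬ (p : ℤ_[p]) ^ (l + 1) ∣ A) (hB : ¬ (p : ℤ_[p]) ^ (l + 1) ∣ B)
    (hG : ¬ (p : ℤ_[p]) ^ (l + 1) ∣ A ^ 2 - 2 * A * B + B ^ 2 - 2 * A - 2 * B + 1)
    (hprim : ∃ i, ¬ (p : ℤ_[p]) ∣ t i)
    (ht₁ : (p : ℤ_[p]) ^ (8 * l + 1) ∣ Q₁ D t) (ht₂ : (p : ℤ_[p]) ^ (8 * l + 1) ∣ Q₂ D A B t)
    (hd : (p : ℤ_[p]) ^ (2 * l) ∣ t 3) (he : (p : ℤ_[p]) ^ (2 * l) ∣ t 4) :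
    ∃ s ≠ 0, Q₁ D s = 0 ∧ Q₂ D A B s = 0 := by
  have hφ := pow_dvd_Q₁_sub_Q₂_form ht₁ ht₂ hd he
  have hb := not_dvd_t1 hl hprim ht₁ hφ hd he
  obtain ⟨y, hy, hyt⟩ := exists_update_root (fun s => Q₂ D A B s - Q₁ D s) t 0 (α := -1)
    (β := -(A + B - 1) * t 1) (γ := D * (t 3 ^ 2 - t 4 ^ 2) - A * B * t 1 ^ 2)
    (fun y => by simp [Q₁, Q₂]; ring) (k := l) (n := 7 * l + 1)
    ((pow_dvd_pow _ (by omega)).trans (dvd_sub ht₂ ht₁))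
    (by rw [show 2 * -1 * t 0 + -(A + B - 1) * t 1 = -(2 * t 0 + (A + B - 1) * t 1) by ring,
      dvd_neg]; exact not_pow_dvd_disc hl hG hb hφ) (by omega)
  set s := update t 0 y
  have hs₁ : (p : ℤ_[p]) ^ (3 * l + (3 * l + 1)) ∣ Q₁ D s := by
    rw [← sub_add_cancel (Q₁ D s) (Q₁ D t)]
    exact (pow_dvd_pow _ (by omega)).trans
      (dvd_add (dvd_Q₁_sub_Q₁ D hyt) ((pow_dvd_pow _ (by omega)).trans ht₁))
  obtain ⟨z, hz, -⟩ := exists_update_root (Q₁ D) s 2 (α := 1) (β := 0)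
    (γ := -D * s 3 ^ 2 - s 0 * s 1) (fun y => by simp [Q₁]; ring) hs₁
    (by simpa [s, dvd_two_mul_iff hp2] using not_pow_dvd_t2 hl hA hB hb ht₁ hφ hd) (by omega)
  have hz0 : update s 2 z ≠ 0 := fun h =>
    hb ((show t 1 = 0 by simpa [s] using congr_fun h 1) ▸ dvd_zero _)
  refine ⟨update s 2 z, hz0, hz, ?_⟩
  have hcancel : Q₂ D A B (update s 2 z) - Q₁ D (update s 2 z) = Q₂ D A B s - Q₁ D s := by
    simp [Q₁, Q₂]; ring
  linear_combination hcancel + hz + hy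

theorem exists_root_of_pow_dvd (hp2 : p ≠ 2) (hD : ¬ (p : ℤ_[p]) ^ 2 ∣ D) (hl : 1 ≤ l)
    (hA : ¬ (p : ℤ_[p]) ^ (l + 1) ∣ A) (hB : ¬ (p : ℤ_[p]) ^ (l + 1) ∣ B)
    (hAB : ¬ (p : ℤ_[p]) ^ (l + 1) ∣ A - B)
    (hG : ¬ (p : ℤ_[p]) ^ (l + 1) ∣ A ^ 2 - 2 * A * B + B ^ 2 - 2 * A - 2 * B + 1)
    (hprim : ∃ i, ¬ (p : ℤ_[p]) ∣ t i)
    (ht₁ : (p : ℤ_[p]) ^ (8 * l + 1) ∣ Q₁ D t) (ht₂ : (p : ℤ_[p]) ^ (8 * l + 1) ∣ Q₂ D A B t) :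
    ∃ s ≠ 0, Q₁ D s = 0 ∧ Q₂ D A B s = 0 := by
  by_cases he : (p : ℤ_[p]) ^ (2 * l) ∣ t 4
  · by_cases hd : (p : ℤ_[p]) ^ (2 * l) ∣ t 3
    · exact exists_root_of_pow_dvd_t3_t4 hp2 hl hA hB hG hprim ht₁ ht₂ hd he
    · exact exists_root_of_not_pow_dvd_t3 hp2 hD hAB ht₁ ht₂ hd
  · exact exists_root_of_not_pow_dvd_t4 hp2 hD ht₁ ht₂ he

end Lifting

section Padic

open PadicInt

variable {p : ℕ} [Fact p.Prime] {D A B : ℤ}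

theorem coe_Q₁ (D : ℤ) (s : Fin 5 → ℤ_[p]) :
    ((Q₁ (D : ℤ_[p]) s : ℤ_[p]) : ℚ_[p]) = Q₁ (D : ℚ_[p]) (fun i => (s i : ℚ_[p])) := by
  simp [Q₁]

theorem coe_Q₂ (D A B : ℤ) (s : Fin 5 → ℤ_[p]) :
    ((Q₂ (D : ℤ_[p]) A B s : ℤ_[p]) : ℚ_[p]) = Q₂ (D : ℚ_[p]) A B (fun i => (s i : ℚ_[p])) := by
  simp [Q₂]

theorem hasPointBSD_of_padicInt {s : Fin 5 → ℤ_[p]} (hs : s ≠ 0)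
    (h₁ : Q₁ (D : ℤ_[p]) s = 0) (h₂ : Q₂ (D : ℤ_[p]) A B s = 0) : hasPointBSD ℚ_[p] D A B := by
  refine ⟨fun i => (s i : ℚ_[p]), fun h => hs (funext fun i => by simpa using congr_fun h i),
    ?_, ?_⟩
  · exact (coe_Q₁ D s).symm.trans (by simp [h₁])
  · exact (coe_Q₂ D A B s).symm.trans (by simp [h₂])

theorem exists_normalized_root_of_hasPointBSD (h : hasPointBSD ℚ_[p] D A B) :
    ∃ s : Fin 5 → ℤ_[p], (∃ i, s i = 1) ∧ Q₁ (D : ℤ_[p]) s = 0 ∧ Q₂ (D : ℤ_[p]) A B s = 0 := by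
  obtain ⟨t, ht, h₁, h₂⟩ := h
  obtain ⟨i, hi⟩ := Finite.exists_max fun j => ‖t j‖
  have hti : t i ≠ 0 := fun h0 =>
    ht (funext fun j => norm_le_zero_iff.mp (by simpa [h0] using hi j))
  have hle : ∀ j, ‖(t i)⁻¹ * t j‖ ≤ 1 := fun j => by
    rw [norm_mul, norm_inv]
    exact inv_mul_le_one_of_le₀ (hi j) (norm_nonneg _)
  let s : Fin 5 → ℤ_[p] := fun j => ⟨(t i)⁻¹ * t j, hle j⟩
  have hs : (fun j => (s j : ℚ_[p])) = fun j => (t i)⁻¹ * t j := rfl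
  refine ⟨s, ⟨i, Subtype.ext (inv_mul_cancel₀ hti)⟩, ?_, ?_⟩
  · rw [← coe_eq_zero, coe_Q₁, hs, Q₁_mul]
    simp [show Q₁ (D : ℚ_[p]) t = 0 from h₁]
  · rw [← coe_eq_zero, coe_Q₂, hs, Q₂_mul]
    simp [show Q₂ (D : ℚ_[p]) A B t = 0 from h₂]

theorem exists_int_approx {N : ℕ} (hN : N ≠ 0) {s : Fin 5 → ℤ_[p]} (hs : ∃ i, s i = 1)
    (h₁ : Q₁ (D : ℤ_[p]) s = 0) (h₂ : Q₂ (D : ℤ_[p]) A B s = 0) :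
    ∃ T : Fin 5 → ℤ, (∃ i, ¬ (p : ℤ) ∣ T i) ∧
      (p : ℤ) ^ N ∣ Q₁ D T ∧ (p : ℤ) ^ N ∣ Q₂ D A B T := by
  let T : Fin 5 → ℤ := fun i => (s i).appr N
  have hsT : ∀ i, (p : ℤ_[p]) ^ N ∣ s i - (T i : ℤ_[p]) := fun i =>
    Ideal.mem_span_singleton.mp (by simpa [T] using appr_spec N (s i))
  obtain ⟨i, hi⟩ := hs
  refine ⟨T, ⟨i, fun hpT => (prime_p (p := p)).not_dvd_one ?_⟩, ?_, ?_⟩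
  · rw [← hi, ← sub_add_cancel (s i) (T i)]
    refine dvd_add ((dvd_pow_self _ hN).trans (hsT i)) ?_
    rw [← pow_one (p : ℤ_[p]), pow_p_dvd_int_iff, pow_one]
    exact hpT
  · rw [← pow_p_dvd_int_iff, intCast_Q₁, ← dvd_neg, ← zero_sub, ← h₁]
    exact dvd_Q₁_sub_Q₁ _ hsT
  · rw [← pow_p_dvd_int_iff, intCast_Q₂, ← dvd_neg, ← zero_sub, ← h₂]
    exact dvd_Q₂_sub_Q₂ _ _ _ hsT

end Padic

theorem stmt_1_general (D A B : ℤ) (p : ℕ) (hp : p.Prime) (hp2 : p ≠ 2)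
    (hp2D : ¬ ((p : ℤ) ^ 2 ∣ D)) (l : ℕ) (hl : 1 ≤ l)
    (hA : ¬ ((p : ℤ) ^ (l + 1) ∣ A)) (hB : ¬ ((p : ℤ) ^ (l + 1) ∣ B))
    (hAB : ¬ ((p : ℤ) ^ (l + 1) ∣ (A - B)))
    (hG : ¬ ((p : ℤ) ^ (l + 1) ∣ (A ^ 2 - 2 * A * B + B ^ 2 - 2 * A - 2 * B + 1))) :
    hasPointBSD (@Padic p ⟨hp⟩) D A B ↔
      ∃ t : Fin 5 → ℤ, (∃ i, ¬ ((p : ℤ) ∣ t i)) ∧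
        ((p : ℤ) ^ (8 * l + 1)) ∣ ((t 2) ^ 2 - D * (t 3) ^ 2 - t 0 * t 1) ∧
        ((p : ℤ) ^ (8 * l + 1)) ∣
          ((t 2) ^ 2 - D * (t 4) ^ 2 - (t 0 + A * t 1) * (t 0 + B * t 1)) := by
  have : Fact p.Prime := ⟨hp⟩
  have cast : ∀ {n : ℕ} {x : ℤ}, ¬ (p : ℤ) ^ n ∣ x → ¬ (p : ℤ_[p]) ^ n ∣ (x : ℤ_[p]) :=
    fun h => by simpa using h
  constructor
  · intro h
    obtain ⟨s, hs, h₁, h₂⟩ := exists_normalized_root_of_hasPointBSD h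
    exact exists_int_approx (by omega) hs h₁ h₂
  · rintro ⟨T, ⟨i, hi⟩, h₁, h₂⟩
    obtain ⟨s, hs, hs₁, hs₂⟩ := exists_root_of_pow_dvd (t := fun i => (T i : ℤ_[p])) hp2
      (cast hp2D) hl (cast hA) (cast hB) (by exact_mod_cast cast hAB) (by exact_mod_cast cast hG)
      ⟨i, by simpa using cast (n := 1) (by simpa using hi)⟩
      (by rw [← intCast_Q₁, PadicInt.pow_p_dvd_int_iff]; exact h₁)
      (by rw [← intCast_Q₂, PadicInt.pow_p_dvd_int_iff]; exact h₂)
    exact hasPointBSD_of_padicInt hs hs₁ hs₂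

theorem stmt_1 (D A B : ℤ) (p : ℕ) (hp : p.Prime) (hp2 : p ≠ 2)
    (hpD : (p : ℤ) ∣ D) (hp2D : ¬ ((p : ℤ) ^ 2 ∣ D)) (l : ℕ) (hl : 1 ≤ l)
    (hA : ¬ ((p : ℤ) ^ (l + 1) ∣ A)) (hB : ¬ ((p : ℤ) ^ (l + 1) ∣ B))
    (hAB : ¬ ((p : ℤ) ^ (l + 1) ∣ (A - B)))
    (hG : ¬ ((p : ℤ) ^ (l + 1) ∣ (A ^ 2 - 2 * A * B + B ^ 2 - 2 * A - 2 * B + 1))) :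
    hasPointBSD (@Padic p ⟨hp⟩) D A B ↔
      ∃ t : Fin 5 → ℤ, (∃ i, ¬ ((p : ℤ) ∣ t i)) ∧
        ((p : ℤ) ^ (8 * l + 1)) ∣ ((t 2) ^ 2 - D * (t 3) ^ 2 - t 0 * t 1) ∧
        ((p : ℤ) ^ (8 * l + 1)) ∣
          ((t 2) ^ 2 - D * (t 4) ^ 2 - (t 0 + A * t 1) * (t 0 + B * t 1)) :=
  stmt_1_general D A B p hp hp2 hp2D l hl hA hB hAB hG
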